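/- arXiv:2010.03980 — 5 statements merged into one kernel-verified Lean document; each statement's English description precedes it below -/
import Mathlib

section
/- Let G be a connected r-regular graph with n vertices whose signless Laplacian spectrum is {2r, (r+1) with multiplicity a, (r-1) with multiplicity b} for some nonnegative integers a, b. Then a = 0, b = r = n - 1, and G is isomorphic to the complete graph K_{r+1}. -/
open Finset Matrix BigOperators

/-- The signless Laplacian matrix `Q(G) = D(G) + A(G)` of a simple graph, over `ℝ`. -/
noncomputable def signlessLaplacian {V : Type*} [Fintype V] [DecidableEq V]
    (G : SimpleGraph V) [DecidableRel G.Adj] : Matrix V V ℝ :=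
  Matrix.diagonal (fun v => (G.degree v : ℝ)) + G.adjMatrix ℝ

lemma signlessLaplacian_isHermitian {V : Type*} [Fintype V] [DecidableEq V]
    (G : SimpleGraph V) [DecidableRel G.Adj] : (signlessLaplacian G).IsHermitian := by
  unfold signlessLaplacian
  apply Matrix.IsHermitian.add
  · exact Matrix.isHermitian_diagonal _
  · rw [Matrix.IsHermitian, conjTranspose_eq_transpose_of_trivial]
    exact G.isSymm_adjMatrix

/-- The signless Laplacian eigenvalues of `G` (as a function on the vertex index type). -/
noncomputable def qEig {V : Type*} [Fintype V] [DecidableEq V]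
    (G : SimpleGraph V) [DecidableRel G.Adj] : V → ℝ :=
  (signlessLaplacian_isHermitian G).eigenvalues

/-!
For `r`-regular `G` we have `Q = r • 1 + A`, so `tr Q = n r` and `tr Q² = n (r² + r)`.
Equating these with the first two power sums of the prescribed spectrum, together with
`n = 1 + a + b`, gives `b = a + r` and `a (r - 1) = 0`. When `r = 1`, connectedness forces
`n ≤ 2`, hence again `a = 0`. So `n = r + 1`, and an `r`-regular graph on `r + 1` vertices is
complete.
-/

theorem Matrix.IsHermitian.trace_cfc {ι 𝕜 : Type*} [Fintype ι] [DecidableEq ι] [RCLike 𝕜]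
    {A : Matrix ι ι 𝕜} (hA : A.IsHermitian) (f : ℝ → ℝ) :
    (cfc f A).trace = ∑ i, (f (hA.eigenvalues i) : 𝕜) := by
  rw [hA.cfc_eq, IsHermitian.cfc, Unitary.conjStarAlgAut_apply, trace_mul_cycle,
    Unitary.coe_star_mul_self, one_mul, trace_diagonal]
  rfl

theorem Matrix.IsHermitian.trace_pow {ι 𝕜 : Type*} [Fintype ι] [DecidableEq ι] [RCLike 𝕜]
    {A : Matrix ι ι 𝕜} (hA : A.IsHermitian) (k : ℕ) :
    (A ^ k).trace = ∑ i, (hA.eigenvalues i : 𝕜) ^ k := by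
  rw [← cfc_pow_id (R := ℝ) A k hA.isSelfAdjoint, hA.trace_cfc]
  push_cast
  rfl

namespace SimpleGraph

variable {V : Type*} [Fintype V] {G : SimpleGraph V} [DecidableRel G.Adj] {r : ℕ}

theorem Connected.card_le_two_of_isRegularOfDegree_one (hconn : G.Connected)
    (hreg : G.IsRegularOfDegree 1) : Fintype.card V ≤ 2 := by
  have hedges := hconn.card_vert_le_card_edgeSet_add_one
  have hsum := G.sum_degrees_eq_twice_card_edges
  simp only [hreg.degree_eq, sum_const, card_univ, smul_eq_mul, mul_one] at hsum
  rw [Nat.card_eq_fintype_card, Nat.card_eq_fintype_card, ← edgeFinset_card] at hedges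
  omega

theorem IsRegularOfDegree.eq_top_of_card_eq (hreg : G.IsRegularOfDegree r)
    (hcard : Fintype.card V = r + 1) : G = ⊤ := by
  ext v w
  simp only [top_adj]
  refine ⟨G.ne_of_adj, fun hvw => ?_⟩
  have hv : G.IsUniversal v := (G.degree_eq_card_sub_one v).mp (by simp [hreg.degree_eq, hcard])
  exact hv hvw

variable [DecidableEq V]

theorem IsRegularOfDegree.signlessLaplacian_eq (hreg : G.IsRegularOfDegree r) :
    signlessLaplacian G = (r : ℝ) • 1 + G.adjMatrix ℝ := by
  simp [signlessLaplacian, hreg.degree_eq, smul_one_eq_diagonal]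

theorem sum_qEig_pow (G : SimpleGraph V) [DecidableRel G.Adj] (k : ℕ) :
    ∑ v, qEig G v ^ k = (signlessLaplacian G ^ k).trace :=
  ((signlessLaplacian_isHermitian G).trace_pow k).symm

theorem IsRegularOfDegree.sum_qEig (hreg : G.IsRegularOfDegree r) :
    ∑ v, qEig G v = Fintype.card V * r := by
  simpa [hreg.signlessLaplacian_eq, trace_add, trace_smul, trace_one, mul_comm]
    using sum_qEig_pow G 1

theorem IsRegularOfDegree.sum_qEig_sq (hreg : G.IsRegularOfDegree r) :
    ∑ v, qEig G v ^ 2 = Fintype.card V * (r ^ 2 + r) := by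
  have htrace : (G.adjMatrix ℝ * G.adjMatrix ℝ).trace = Fintype.card V * r := by
    simp only [trace, Matrix.diag, adjMatrix_mul_self_apply_self, hreg.degree_eq]
    simp [mul_comm]
  rw [sum_qEig_pow, hreg.signlessLaplacian_eq, sq, add_mul, mul_add, mul_add]
  simp only [Algebra.mul_smul_comm, Algebra.smul_mul_assoc, mul_one, one_mul, trace_add,
    trace_smul, trace_one, smul_eq_mul, trace_adjMatrix, mul_zero, add_zero, htrace]
  ring

end SimpleGraph

theorem eq_add_and_mul_eq_zero_of_moments {n r a b : ℝ} (hcard : n = 1 + a + b)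
    (hsum : 2 * r + a * (r + 1) + b * (r - 1) = n * r)
    (hsq : (2 * r) ^ 2 + a * (r + 1) ^ 2 + b * (r - 1) ^ 2 = n * (r ^ 2 + r)) :
    b = a + r ∧ a * (r - 1) = 0 := by
  have hb : b = a + r := by linear_combination -hsum - r * hcard
  exact ⟨hb, by linear_combination (-1/2) * hsq - ((r^2 + r)/2) * hcard + ((1 - 3 * r)/2) * hb⟩

/-- A connected `r`-regular graph on `n` vertices with signless Laplacian spectrum
`{2r, (r+1)^a, (r-1)^b}` satisfies `a = 0`, `b = r = n - 1`, and is the complete graph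
`K_{r+1}`. -/
theorem regular_spectrum_complete_classification {n : ℕ}
    (G : SimpleGraph (Fin n)) [DecidableRel G.Adj] (r a b : ℕ)
    (hconn : G.Connected) (hreg : G.IsRegularOfDegree r)
    (hspec : Multiset.map (qEig G) Finset.univ.val
      = {2 * (r : ℝ)} + Multiset.replicate a ((r : ℝ) + 1)
        + Multiset.replicate b ((r : ℝ) - 1)) :
    a = 0 ∧ b = r ∧ r = n - 1 ∧ Nonempty (G ≃g SimpleGraph.completeGraph (Fin (r+1))) := by
  have hcard : n = 1 + a + b := by simpa [add_comm] using congrArg Multiset.card hspec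
  have hsum := hreg.sum_qEig
  have hsq := hreg.sum_qEig_sq
  rw [Finset.sum_eq_multiset_sum, hspec] at hsum
  rw [Finset.sum_eq_multiset_sum, show (fun v => qEig G v ^ 2) = (· ^ 2) ∘ qEig G from rfl,
    ← Multiset.map_map, hspec] at hsq
  simp only [Fintype.card_fin, Multiset.sum_add, Multiset.map_add, Multiset.map_singleton,
    Multiset.map_replicate, Multiset.sum_singleton, Multiset.sum_replicate, nsmul_eq_mul] at hsum hsq
  obtain ⟨hb_real, har⟩ := eq_add_and_mul_eq_zero_of_moments (by exact_mod_cast hcard) hsum hsq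
  have hb : b = a + r := by exact_mod_cast hb_real
  have ha : a = 0 := by
    rcases mul_eq_zero.mp har with ha | hr
    · exact_mod_cast ha
    · have hr : r = 1 := by exact_mod_cast sub_eq_zero.mp hr
      subst hr
      have := hconn.card_le_two_of_isRegularOfDegree_one hreg
      rw [Fintype.card_fin] at this
      omega
  have hn : n = r + 1 := by omega
  refine ⟨ha, by omega, by omega, ⟨?_⟩⟩
  rw [hreg.eq_top_of_card_eq (by rw [Fintype.card_fin, hn])]
  exact SimpleGraph.Iso.completeGraph (finCongr hn)
end

section
/- A simple connected graph G on n ≥ 2 vertices has exactly two distinct signless Laplacian eigenvalues if and only if G is isomorphic to the complete graph K_n. -/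
open Finset Matrix BigOperators

/-!
For a Hermitian matrix, having at most two distinct eigenvalues `a, b` means exactly
`(Q - a)(Q - b) = 0`, and having one means being scalar; both follow from the functional calculus.
If `(Q - a)(Q - b) = 0` and `u ≠ w` are non-adjacent, then `Q u w = 0` forces `(Q²) u w = 0`;
since `Q` is entrywise non-negative, `u` and `w` have no common neighbour, and a connected graph
without induced paths on three vertices is complete. Conversely
`Q(K_n) = (n - 2) I + J` with `J² = n J`, which is not scalar once `n ≥ 2`.
-/

open Polynomial

theorem Finset.card_le_two_iff_subset_pair {α : Type*} [DecidableEq α] [Nonempty α]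
    {s : Finset α} : #s ≤ 2 ↔ ∃ a b, s ⊆ {a, b} := by
  refine ⟨fun h => ?_, fun ⟨a, b, hab⟩ => (card_le_card hab).trans card_le_two⟩
  rcases h.lt_or_eq with h | h
  · obtain ⟨a, ha⟩ := card_le_one_iff_subset_singleton.mp (Nat.lt_succ_iff.mp h)
    exact ⟨a, a, by simpa using ha⟩
  · obtain ⟨a, b, -, rfl⟩ := card_eq_two.mp h
    exact ⟨a, b, subset_rfl⟩

namespace Matrix.IsHermitian

variable {n 𝕜 : Type*} [RCLike 𝕜] [Fintype n] [DecidableEq n] {A : Matrix n n 𝕜}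
  (hA : A.IsHermitian)
include hA

theorem aeval_eq_zero_iff (p : ℝ[X]) :
    aeval A p = 0 ↔ ∀ i, p.eval (hA.eigenvalues i) = 0 := by
  rw [← cfc_polynomial p A hA.isSelfAdjoint, ← cfc_zero ℝ A,
    cfc_eq_cfc_iff_eqOn (ha := hA.isSelfAdjoint), hA.spectrum_real_eq_range_eigenvalues]
  simp [Set.EqOn]

theorem eq_smul_one_iff (c : ℝ) : A = c • 1 ↔ ∀ i, hA.eigenvalues i = c := by
  have h := hA.aeval_eq_zero_iff (X - C c)
  simp only [map_sub, aeval_X, aeval_C, Algebra.algebraMap_eq_smul_one, eval_sub, eval_X,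
    eval_C, sub_eq_zero] at h
  exact h

theorem sub_smul_one_mul_sub_smul_one_eq_zero_iff (a b : ℝ) :
    (A - a • 1) * (A - b • 1) = 0 ↔ ∀ i, hA.eigenvalues i = a ∨ hA.eigenvalues i = b := by
  have h := hA.aeval_eq_zero_iff ((X - C a) * (X - C b))
  simp only [map_mul, map_sub, aeval_X, aeval_C, Algebra.algebraMap_eq_smul_one, eval_mul,
    eval_sub, eval_X, eval_C, mul_eq_zero, sub_eq_zero] at h
  exact h

theorem card_image_eigenvalues_le_one_iff :
    #(univ.image hA.eigenvalues) ≤ 1 ↔ ∃ c : ℝ, A = c • 1 := by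
  simp only [card_le_one_iff_subset_singleton, hA.eq_smul_one_iff, image_subset_iff, mem_univ,
    mem_singleton, true_implies]

theorem card_image_eigenvalues_le_two_iff :
    #(univ.image hA.eigenvalues) ≤ 2 ↔ ∃ a b : ℝ, (A - a • 1) * (A - b • 1) = 0 := by
  simp only [Finset.card_le_two_iff_subset_pair, hA.sub_smul_one_mul_sub_smul_one_eq_zero_iff,
    image_subset_iff, mem_univ, mem_insert, mem_singleton, true_implies]

end Matrix.IsHermitian

namespace SimpleGraph

variable {V : Type*} {G : SimpleGraph V}

theorem Preconnected.eq_top_of_adj_trans (hG : G.Preconnected)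
    (h : ∀ u v w, G.Adj u v → G.Adj v w → u ≠ w → G.Adj u w) : G = ⊤ := by
  have eq_or_adj : ∀ {u w : V} (p : G.Walk u w), u = w ∨ G.Adj u w := by
    intro u w p
    induction p with
    | nil => exact .inl rfl
    | @cons u v w huv _ ih =>
      rcases ih with rfl | hvw
      · exact .inr huv
      · exact or_iff_not_imp_left.mpr (h u v w huv hvw)
  ext u w
  exact ⟨G.ne_of_adj, fun huw => ((eq_or_adj (hG u w).some).resolve_left huw)⟩

theorem eq_top_of_iso_top {W : Type*} (e : G ≃g (⊤ : SimpleGraph W)) : G = ⊤ := by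
  ext u v
  rw [← e.map_adj_iff]
  simp

variable [Fintype V] [DecidableEq V] [DecidableRel G.Adj]

theorem signlessLaplacian_apply_of_ne {u v : V} (h : u ≠ v) :
    signlessLaplacian G u v = if G.Adj u v then 1 else 0 := by
  simp [signlessLaplacian, h]

theorem signlessLaplacian_nonneg (u v : V) : 0 ≤ signlessLaplacian G u v := by
  simp only [signlessLaplacian, Matrix.add_apply, diagonal_apply, adjMatrix_apply]
  split_ifs <;> positivity

theorem signlessLaplacian_mul_self_apply_pos {u v w : V} (huv : G.Adj u v) (hvw : G.Adj v w) :
    0 < (signlessLaplacian G * signlessLaplacian G) u w := by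
  rw [mul_apply]
  calc (0 : ℝ) < signlessLaplacian G u v * signlessLaplacian G v w := by
        simp [signlessLaplacian_apply_of_ne, huv, hvw, G.ne_of_adj huv, G.ne_of_adj hvw]
    _ ≤ ∑ x, signlessLaplacian G u x * signlessLaplacian G x w :=
        single_le_sum (fun x _ => mul_nonneg (signlessLaplacian_nonneg u x)
          (signlessLaplacian_nonneg x w)) (mem_univ v)

theorem Preconnected.eq_top_of_signlessLaplacian_quadratic (hG : G.Preconnected) {a b : ℝ}
    (h : (signlessLaplacian G - a • 1) * (signlessLaplacian G - b • 1) = 0) : G = ⊤ := by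
  refine hG.eq_top_of_adj_trans fun u v w huv hvw huw => ?_
  by_contra hnot
  set Q := signlessLaplacian G
  have hexpand : (Q - a • 1) * (Q - b • 1) = Q * Q - (a + b) • Q + (a * b) • 1 := by
    simp only [sub_mul, mul_sub, Matrix.smul_mul, Matrix.mul_smul, one_mul, mul_one, smul_smul]
    module
  have huw_entry := congr_fun₂ h u w
  rw [hexpand] at huw_entry
  simp only [Matrix.add_apply, Matrix.sub_apply, Matrix.smul_apply, Q,
    signlessLaplacian_apply_of_ne huw, hnot, ↓reduceIte, one_apply_ne huw, smul_eq_mul, mul_zero,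
    sub_zero, add_zero, Matrix.zero_apply] at huw_entry
  exact (signlessLaplacian_mul_self_apply_pos huv hvw).ne' huw_entry

omit [DecidableRel G.Adj]
variable [DecidableRel (⊤ : SimpleGraph V).Adj]

theorem signlessLaplacian_top :
    signlessLaplacian (⊤ : SimpleGraph V) = ((Fintype.card V : ℝ) - 2) • 1 + of fun _ _ => 1 := by
  ext u v
  rcases eq_or_ne u v with rfl | huv
  · have hdeg : (⊤ : SimpleGraph V).degree u = Fintype.card V - 1 := by
      convert complete_graph_degree u
    have hcard : 1 ≤ Fintype.card V := Fintype.card_pos_iff.mpr ⟨u⟩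
    simp only [signlessLaplacian, Matrix.add_apply, diagonal_apply_eq, hdeg, Nat.cast_sub hcard,
      Nat.cast_one, adjMatrix_apply, SimpleGraph.irrefl, ↓reduceIte, add_zero, Matrix.smul_apply,
      one_apply_eq, smul_eq_mul, mul_one, of_apply]
    ring
  · simp [signlessLaplacian_apply_of_ne huv, huv]

theorem signlessLaplacian_top_quadratic :
    (signlessLaplacian (⊤ : SimpleGraph V) - ((Fintype.card V : ℝ) - 2) • 1) *
      (signlessLaplacian (⊤ : SimpleGraph V) - (2 * (Fintype.card V : ℝ) - 2) • 1) = 0 := by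
  set J : Matrix V V ℝ := of fun _ _ => 1
  have hJ : J * J = (Fintype.card V : ℝ) • J := by
    ext
    simp [J, mul_apply]
  have hsub : ((Fintype.card V : ℝ) - 2) • 1 + J - (2 * (Fintype.card V : ℝ) - 2) • 1 =
      J - (Fintype.card V : ℝ) • 1 := by
    module
  rw [signlessLaplacian_top, add_sub_cancel_left, hsub, mul_sub, hJ, Matrix.mul_smul, mul_one,
    sub_self]

theorem signlessLaplacian_top_ne_smul_one [Nontrivial V] (c : ℝ) :
    signlessLaplacian (⊤ : SimpleGraph V) ≠ c • 1 := by
  obtain ⟨u, v, huv⟩ := exists_pair_ne V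
  intro h
  have huv_entry := congr_fun₂ h u v
  simp [signlessLaplacian_apply_of_ne huv, huv] at huv_entry

end SimpleGraph

/-- A simple connected graph on `n ≥ 2` vertices has exactly two distinct signless
Laplacian eigenvalues if and only if it is the complete graph `K_n`. -/
theorem two_distinct_qEig_iff_complete {n : ℕ} (hn : 2 ≤ n)
    (G : SimpleGraph (Fin n)) [DecidableRel G.Adj] (hconn : G.Connected) :
    (Finset.univ.image (qEig G)).card = 2 ↔ Nonempty (G ≃g SimpleGraph.completeGraph (Fin n)) := by
  have hQ := signlessLaplacian_isHermitian G
  have two_iff : ∀ k : ℕ, k = 2 ↔ k ≤ 2 ∧ ¬k ≤ 1 := by omega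
  rw [two_iff, qEig, hQ.card_image_eigenvalues_le_two_iff, hQ.card_image_eigenvalues_le_one_iff]
  constructor
  · rintro ⟨⟨a, b, hab⟩, -⟩
    obtain rfl := hconn.preconnected.eq_top_of_signlessLaplacian_quadratic hab
    exact ⟨.refl⟩
  · rintro ⟨e⟩
    obtain rfl := SimpleGraph.eq_top_of_iso_top e
    have : Nontrivial (Fin n) := Fin.nontrivial_iff_two_le.mpr hn
    exact ⟨⟨_, _, SimpleGraph.signlessLaplacian_top_quadratic⟩,
      fun ⟨c, hc⟩ => SimpleGraph.signlessLaplacian_top_ne_smul_one c hc⟩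
end

section
/- Let a_1 ≥ a_2 ≥ ... ≥ a_n be nonnegative real numbers. Then (Σ_{i=1}^n a_i)(a_1 + a_n) ≥ Σ_{i=1}^n a_i² + n·a_1·a_n, with equality if and only if there exists s ∈ {1,...,n} with a_1 = ... = a_s and a_{s+1} = ... = a_n. -/
/-!
Since `a₁ ≥ aᵢ ≥ aₙ`, every product `(a₁ - aᵢ)(aᵢ - aₙ)` is nonnegative, and summing over `i`
gives exactly the difference of the two sides. Equality forces each `aᵢ` to be `a₁` or `aₙ`;
by monotonicity the indices with `aᵢ = a₁` form an initial segment.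
-/

open Finset

section SumSubMulSub

variable {ι R : Type*} [Fintype ι]

theorem sum_sub_mul_sub_eq [CommRing R] (a : ι → R) (x y : R) :
    ∑ i, (x - a i) * (a i - y)
      = (∑ i, a i) * (x + y) - ∑ i, a i ^ 2 - Fintype.card ι * (x * y) := by
  simp only [show ∀ i, (x - a i) * (a i - y) = a i * (x + y) - a i ^ 2 - x * y from
    fun i => by ring, sum_sub_distrib, ← sum_mul, sum_const, card_univ, nsmul_eq_mul, mul_assoc]

variable [CommRing R] [LinearOrder R] [IsStrictOrderedRing R] {a : ι → R} {x y : R}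

theorem sum_sub_mul_sub_nonneg (hx : ∀ i, a i ≤ x) (hy : ∀ i, y ≤ a i) :
    0 ≤ ∑ i, (x - a i) * (a i - y) :=
  sum_nonneg fun i _ => mul_nonneg (sub_nonneg.2 (hx i)) (sub_nonneg.2 (hy i))

theorem sum_sub_mul_sub_eq_zero_iff (hx : ∀ i, a i ≤ x) (hy : ∀ i, y ≤ a i) :
    ∑ i, (x - a i) * (a i - y) = 0 ↔ ∀ i, a i = x ∨ a i = y := by
  rw [sum_eq_zero_iff_of_nonneg fun i _ => mul_nonneg (sub_nonneg.2 (hx i)) (sub_nonneg.2 (hy i))]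
  simp only [mem_univ, true_implies, mul_eq_zero, sub_eq_zero, eq_comm (a := x)]

end SumSubMulSub

theorem Fin.mem_iff_lt_card_of_isLowerSet {n : ℕ} {S : Finset (Fin n)}
    (hS : IsLowerSet (S : Set (Fin n))) (i : Fin n) : i ∈ S ↔ (i : ℕ) < #S := by
  constructor
  · intro hi
    have := card_le_card fun k (hk : k ∈ Finset.Iic i) => hS (mem_Iic.1 hk) hi
    rw [Fin.card_Iic] at this
    omega
  · intro hlt
    by_contra hi
    have := card_le_card fun k (hk : k ∈ S) =>
      mem_Iio.2 <| lt_of_not_ge fun hik => hi (hS hik hk)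
    rw [Fin.card_Iio] at this
    omega

/-- For nonnegative reals `a₁ ≥ a₂ ≥ ⋯ ≥ aₙ`,
`(Σ aᵢ)(a₁ + aₙ) ≥ Σ aᵢ² + n·a₁·aₙ`, with equality iff there is `s ∈ {1,…,n}` with
`a₁ = ⋯ = aₛ` and `a_{s+1} = ⋯ = aₙ`. -/
theorem sum_mul_first_add_last_ge (n : ℕ) (hn : 1 ≤ n) (a : Fin n → ℝ)
    (hmono : Antitone a) :
    (∑ i, a i) * (a ⟨0, by omega⟩ + a ⟨n - 1, by omega⟩)
        ≥ (∑ i, (a i) ^ 2) + n * (a ⟨0, by omega⟩ * a ⟨n - 1, by omega⟩)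
    ∧ ((∑ i, a i) * (a ⟨0, by omega⟩ + a ⟨n - 1, by omega⟩)
          = (∑ i, (a i) ^ 2) + n * (a ⟨0, by omega⟩ * a ⟨n - 1, by omega⟩)
        ↔ ∃ s : ℕ, 1 ≤ s ∧ s ≤ n
            ∧ (∀ i : Fin n, (i : ℕ) < s → a i = a ⟨0, by omega⟩)
            ∧ (∀ i : Fin n, s ≤ (i : ℕ) → a i = a ⟨n - 1, by omega⟩)) := by
  set A := a ⟨0, by omega⟩
  set B := a ⟨n - 1, by omega⟩
  have hA : ∀ i, a i ≤ A := fun i => hmono (Fin.le_def.2 (Nat.zero_le _))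
  have hB : ∀ i, B ≤ a i := fun i => hmono (Fin.le_def.2 (by simp; omega))
  have key := sum_sub_mul_sub_eq a A B
  have hD := sum_sub_mul_sub_nonneg hA hB
  rw [Fintype.card_fin] at key
  refine ⟨by linarith, ?_⟩
  rw [show _ = _ ↔ ∑ i, (A - a i) * (a i - B) = 0 from ⟨fun h => by linarith, fun h => by linarith⟩,
    sum_sub_mul_sub_eq_zero_iff hA hB]
  constructor
  · intro hAB
    set S := univ.filter fun i => a i = A
    have hS : IsLowerSet (S : Set (Fin n)) := fun i j hji hi => by
      simp only [S, coe_filter, mem_univ, true_and, Set.mem_ofPred_eq] at hi ⊢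
      exact le_antisymm (hA j) (hi ▸ hmono hji)
    refine ⟨#S, ?_, card_le_univ S |>.trans_eq (Fintype.card_fin n), fun i hi => ?_, fun i hi => ?_⟩
    · exact card_pos.2 ⟨⟨0, by omega⟩, by simp [S, A]⟩
    · simpa [S] using (Fin.mem_iff_lt_card_of_isLowerSet hS i).2 hi
    · refine (hAB i).resolve_left fun h => ?_
      have := (Fin.mem_iff_lt_card_of_isLowerSet hS i).1 (by simp [S, h])
      omega
  · rintro ⟨s, -, -, hlo, hhi⟩ i
    exact (lt_or_ge (i : ℕ) s).imp (hlo i) (hhi i)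
end

section
/- Let α, β, x, y be positive real numbers with 0 < α ≤ x ≤ y ≤ β. Then √(αβ)/(α+β) ≤ √(xy)/(x+y), with equality if and only if x = α and y = β. -/
/-- For positive reals with `0 < α ≤ x ≤ y ≤ β`,
`√(αβ)/(α+β) ≤ √(xy)/(x+y)`, with equality iff `x = α` and `y = β`. -/
theorem sqrt_div_add_mono (α x y β : ℝ) (hα : 0 < α) (h1 : α ≤ x) (h2 : x ≤ y)
    (h3 : y ≤ β) :
    Real.sqrt (α * β) / (α + β) ≤ Real.sqrt (x * y) / (x + y)
    ∧ (Real.sqrt (α * β) / (α + β) = Real.sqrt (x * y) / (x + y) ↔ x = α ∧ y = β) := by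
  have hx : (0:ℝ) < x := hα.trans_le h1
  have hy : (0:ℝ) < y := hx.trans_le h2
  have hβ : (0:ℝ) < β := hy.trans_le h3
  have hA : (0:ℝ) < α + β := by linarith
  have hB : (0:ℝ) < x + y := by linarith
  have h4 : 0 ≤ β * x - α * y := by nlinarith
  have h5 : 0 ≤ β * y - α * x := by nlinarith
  have key : α * β * (x + y) ^ 2 ≤ x * y * (α + β) ^ 2 := by
    nlinarith [mul_nonneg h4 h5]
  have e1 : Real.sqrt (α * β) * (x + y) = Real.sqrt (α * β * (x + y) ^ 2) := by
    rw [Real.sqrt_mul (by positivity : (0:ℝ) ≤ α * β) ((x + y) ^ 2), Real.sqrt_sq hB.le]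
  have e2 : Real.sqrt (x * y) * (α + β) = Real.sqrt (x * y * (α + β) ^ 2) := by
    rw [Real.sqrt_mul (by positivity : (0:ℝ) ≤ x * y) ((α + β) ^ 2), Real.sqrt_sq hA.le]
  constructor
  · rw [div_le_div_iff₀ hA hB, e1, e2]
    exact Real.sqrt_le_sqrt key
  · constructor
    · intro heq
      rw [div_eq_div_iff hA.ne' hB.ne', e1, e2] at heq
      have heq' : α * β * (x + y) ^ 2 = x * y * (α + β) ^ 2 := by
        have := congrArg (· ^ 2) heq
        simpa [Real.sq_sqrt (by positivity : (0:ℝ) ≤ α * β * (x + y) ^ 2),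
          Real.sq_sqrt (by positivity : (0:ℝ) ≤ x * y * (α + β) ^ 2)] using this
      have hprod : (β * x - α * y) * (β * y - α * x) = 0 := by linear_combination -heq'
      rcases mul_eq_zero.1 hprod with h | h
      · constructor
        · nlinarith [mul_nonneg (sub_nonneg.2 h3) hx.le, mul_nonneg (sub_nonneg.2 h1) hy.le]
        · nlinarith [mul_nonneg (sub_nonneg.2 h3) hx.le, mul_nonneg (sub_nonneg.2 h1) hy.le]
      · constructor
        · nlinarith [mul_nonneg (sub_nonneg.2 h2) hα.le, mul_nonneg (sub_nonneg.2 h3) hy.le]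
        · nlinarith [mul_nonneg (sub_nonneg.2 h2) hα.le, mul_nonneg (sub_nonneg.2 h3) hy.le]
    · rintro ⟨rfl, rfl⟩
      rfl
end

section
/- Let G be a graph with n ≥ 2 vertices and m ≥ 1 edges, with signless Laplacian eigenvalues q_1,...,q_n. Let γ_i = |q_i - 2m/n| ordered so that γ_1 ≥ ... ≥ γ_n > 0, and let M1 be the first Zagreb index. Then the signless Laplacian energy satisfies QE(G) ≥ 2·√((2m + M1 - 4m²/n)·n) · √(γ_1·γ_n)/(γ_1 + γ_n). -/
open Finset Matrix BigOperators

/-- The number of edges of `G`, as a real number. -/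
noncomputable def mE {V : Type*} [Fintype V] [DecidableEq V]
    (G : SimpleGraph V) [DecidableRel G.Adj] : ℝ :=
  G.edgeFinset.card

/-- The first Zagreb index `M₁(G) = Σ d(v)²`, as a real number. -/
noncomputable def M1 {V : Type*} [Fintype V] [DecidableEq V]
    (G : SimpleGraph V) [DecidableRel G.Adj] : ℝ :=
  ∑ v, (G.degree v : ℝ) ^ 2

/-- The signless Laplacian energy `QE(G) = Σ |qᵢ - 2m/n|`. -/
noncomputable def QE {V : Type*} [Fintype V] [DecidableEq V]
    (G : SimpleGraph V) [DecidableRel G.Adj] : ℝ :=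
  ∑ i, |qEig G i - 2 * mE G / (Fintype.card V : ℝ)|

/-!
Write `γᵢ = |qᵢ - 2m/n|`, so that `Σ γᵢ = QE(G)`. Since `Σ qᵢ = tr Q = 2m` and
`Σ qᵢ² = tr Q² = 2m + M₁` (the diagonal of `Q²` is `dᵥ² + dᵥ`), the variance identity gives
`Σ γᵢ² = 2m + M₁ - 4m²/n`. All `γᵢ` lie in `[γₙ, γ₁]`, so summing `(γ₁ - γᵢ)(γᵢ - γₙ) ≥ 0`
yields `Σ γᵢ² + n γ₁ γₙ ≤ (γ₁ + γₙ) QE(G)`, and AM–GM bounds the left side from below by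
`2 √(n Σ γᵢ²) √(γ₁ γₙ)`.
-/

theorem Matrix.IsHermitian.trace_mul_self_eq_sum_sq_eigenvalues {𝕜 ι : Type*} [RCLike 𝕜]
    [Fintype ι] [DecidableEq ι] {A : Matrix ι ι 𝕜} (hA : A.IsHermitian) :
    (A * A).trace = ∑ i, (hA.eigenvalues i : 𝕜) ^ 2 := by
  conv_lhs => rw [hA.spectral_theorem, ← map_mul, Unitary.conjStarAlgAut_apply, trace_mul_cycle,
    Unitary.coe_star_mul_self, one_mul, diagonal_mul_diagonal, trace_diagonal]
  simp [sq]

theorem Finset.sum_sq_sub_mean {ι : Type*} [Fintype ι] (f : ι → ℝ) :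
    ∑ i, (f i - (∑ j, f j) / Fintype.card ι) ^ 2
      = ∑ i, f i ^ 2 - (∑ i, f i) ^ 2 / Fintype.card ι := by
  rcases isEmpty_or_nonempty ι with hι | hι
  · simp
  have hcard : (Fintype.card ι : ℝ) ≠ 0 := by positivity
  simp only [sub_sq, sum_add_distrib, sum_sub_distrib, ← sum_mul, ← mul_sum, sum_const,
    card_univ, nsmul_eq_mul]
  field_simp
  ring

section signlessLaplacian

variable {V : Type*} [Fintype V] [DecidableEq V] (G : SimpleGraph V) [DecidableRel G.Adj]

lemma sum_degree_eq_two_mul_mE : ∑ v, (G.degree v : ℝ) = 2 * mE G := by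
  rw [mE]; exact_mod_cast G.sum_degrees_eq_twice_card_edges

lemma trace_signlessLaplacian : (signlessLaplacian G).trace = 2 * mE G := by
  rw [signlessLaplacian, trace_add, trace_diagonal, SimpleGraph.trace_adjMatrix, add_zero,
    sum_degree_eq_two_mul_mE]

lemma trace_signlessLaplacian_mul_self :
    (signlessLaplacian G * signlessLaplacian G).trace = 2 * mE G + M1 G := by
  set D : Matrix V V ℝ := diagonal fun v => (G.degree v : ℝ)
  set A := G.adjMatrix ℝ
  have hDA : (D * A).trace = 0 := by
    simp [D, A, trace, diagonal_mul, -SimpleGraph.mul_adjMatrix_apply]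
  have hAD : (A * D).trace = 0 := by
    simp [D, A, trace, mul_diagonal, -SimpleGraph.adjMatrix_mul_apply]
  have hDD : (D * D).trace = M1 G := by simp [D, M1, diagonal_mul_diagonal, sq]
  have hAA : (A * A).trace = 2 * mE G := by
    simp only [A, trace, diag_apply, G.adjMatrix_mul_self_apply_self, sum_degree_eq_two_mul_mE]
  have : signlessLaplacian G * signlessLaplacian G = D * D + D * A + A * D + A * A := by
    rw [signlessLaplacian]; noncomm_ring
  rw [this, trace_add, trace_add, trace_add, hDA, hAD, hDD, hAA]
  ring

lemma sum_qEig : ∑ v, qEig G v = 2 * mE G := by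
  simpa [qEig] using ((signlessLaplacian_isHermitian G).trace_eq_sum_eigenvalues).symm.trans
    (trace_signlessLaplacian G)

lemma sum_sq_qEig : ∑ v, qEig G v ^ 2 = 2 * mE G + M1 G := by
  simpa [qEig] using
    ((signlessLaplacian_isHermitian G).trace_mul_self_eq_sum_sq_eigenvalues).symm.trans
      (trace_signlessLaplacian_mul_self G)

lemma sum_sq_qEig_sub_avg :
    ∑ v, (qEig G v - 2 * mE G / Fintype.card V) ^ 2
      = 2 * mE G + M1 G - 4 * mE G ^ 2 / Fintype.card V := by
  have h := Finset.sum_sq_sub_mean (qEig G)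
  rw [sum_qEig, sum_sq_qEig] at h
  rw [h]
  ring

end signlessLaplacian

theorem Finset.sum_sq_add_card_mul_le {ι : Type*} (s : Finset ι) (f : ι → ℝ) {a b : ℝ}
    (hf : ∀ i ∈ s, b ≤ f i ∧ f i ≤ a) :
    ∑ i ∈ s, f i ^ 2 + #s * (a * b) ≤ (a + b) * ∑ i ∈ s, f i := by
  -- Diaz–Metcalf: `(a - fᵢ) (fᵢ - b) ≥ 0` for each term.
  have hterm : ∀ i ∈ s, f i ^ 2 + a * b ≤ (a + b) * f i := fun i hi => by
    nlinarith [mul_nonneg (sub_nonneg.2 (hf i hi).1) (sub_nonneg.2 (hf i hi).2)]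
  simpa [sum_add_distrib, mul_sum] using sum_le_sum hterm

theorem Finset.two_mul_sqrt_sum_sq_mul_card_le {ι : Type*} (s : Finset ι) (f : ι → ℝ)
    {a b : ℝ} (hb : 0 ≤ b) (hf : ∀ i ∈ s, b ≤ f i ∧ f i ≤ a) :
    2 * √((∑ i ∈ s, f i ^ 2) * #s) * √(a * b) ≤ (a + b) * ∑ i ∈ s, f i := by
  set T := ∑ i ∈ s, f i ^ 2
  have hT : 0 ≤ T := sum_nonneg fun i _ => sq_nonneg (f i)
  have hab : 0 ≤ #s * (a * b) := by
    rcases s.eq_empty_or_nonempty with rfl | ⟨i, hi⟩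
    · simp
    · have := (hf i hi).1.trans (hf i hi).2
      exact mul_nonneg (Nat.cast_nonneg _) (mul_nonneg (hb.trans this) hb)
  calc 2 * √(T * #s) * √(a * b) = 2 * √T * √(#s * (a * b)) := by
        rw [Real.sqrt_mul hT, Real.sqrt_mul (Nat.cast_nonneg _)]; ring
    _ ≤ T + #s * (a * b) := by
        nlinarith [sq_nonneg (√T - √(#s * (a * b))), Real.sq_sqrt hT, Real.sq_sqrt hab]
    _ ≤ (a + b) * ∑ i ∈ s, f i := s.sum_sq_add_card_mul_le f hf

/-- Lower bound for the signless Laplacian energy: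
`QE(G) ≥ 2√((2m + M₁ - 4m²/n)·n) · √(γ₁γₙ)/(γ₁ + γₙ)`, where the `γᵢ = |qᵢ - 2m/n|`
are arranged in nonincreasing order and `γₙ > 0`. -/
theorem QE_lower_bound {n : ℕ} (hn : 2 ≤ n) (G : SimpleGraph (Fin n))
    [DecidableRel G.Adj]
    (γ : Fin n → ℝ) (e : Equiv.Perm (Fin n))
    (hγ : ∀ i, γ i = |qEig G (e i) - 2 * mE G / (n : ℝ)|)
    (hmono : Antitone γ) :
    QE G ≥ 2 * Real.sqrt ((2 * mE G + M1 G - 4 * (mE G) ^ 2 / (n : ℝ)) * (n : ℝ))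
        * (Real.sqrt (γ ⟨0, by omega⟩ * γ ⟨n - 1, by omega⟩)
            / (γ ⟨0, by omega⟩ + γ ⟨n - 1, by omega⟩)) := by
  set a := γ ⟨0, by omega⟩
  set b := γ ⟨n - 1, by omega⟩
  have hbounds : ∀ i ∈ univ, b ≤ γ i ∧ γ i ≤ a := fun i _ =>
    ⟨hmono (by simp [Fin.le_def]; omega), hmono (by simp [Fin.le_def])⟩
  have hb : 0 ≤ b := (hγ _).ge.trans' (abs_nonneg _)
  have hsum : ∑ i, γ i = QE G := by
    simp only [hγ, QE, Fintype.card_fin]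
    exact Equiv.sum_comp e fun v => |qEig G v - 2 * mE G / n|
  have hsum_sq : ∑ i, γ i ^ 2 = 2 * mE G + M1 G - 4 * mE G ^ 2 / n := by
    simp only [hγ, sq_abs]
    simpa using (Equiv.sum_comp e _).trans (sum_sq_qEig_sub_avg G)
  have key := univ.two_mul_sqrt_sum_sq_mul_card_le γ hb hbounds
  rw [hsum, hsum_sq, card_univ, Fintype.card_fin] at key
  rw [ge_iff_le, mul_div_assoc']
  have hab : 0 ≤ a + b := by linarith [(hbounds ⟨0, by omega⟩ (mem_univ _)).1]
  exact div_le_of_le_mul₀ hab (sum_nonneg fun _ _ => abs_nonneg _) (by linarith)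
end
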